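/- In the Byzcuit object transition system, sequence numbers never decrease along any execution: if Active s →* σ, then (a) if σ = Active s' then s' ≥ s, and (b) if σ = Locked T' s' then s' ≥ s. Moreover, each abort step strictly increases the object's sequence number: if Step (Active s) (lock T sT) (Locked T sT) and Step (Locked T sT) (abort T sT) (Active s'), then s' = sT + 1 > sT ≥ s. -/

import Mathlib

/-- States of the life cycle of a single Byzcuit object. -/
inductive ObjState : Type where
  | Active : ℕ → ObjState
  | Locked : ℕ → ℕ → ObjState
  | Inactive : ℕ → ObjState
deriving DecidableEq

/-- Labels of the transitions: lock, commit and abort, each carrying a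
transaction `T` and a transaction sequence number `sT`. -/
inductive Label : Type where
  | lock : ℕ → ℕ → Label
  | commit : ℕ → ℕ → Label
  | abort : ℕ → ℕ → Label
deriving DecidableEq

/-- The step relation of the Byzcuit object transition system, generated by
exactly three rules. -/
inductive Step : ObjState → Label → ObjState → Prop where
  | lock {s T sT : ℕ} (h : sT ≥ s) :
      Step (.Active s) (.lock T sT) (.Locked T sT)
  | commit {T sT : ℕ} :
      Step (.Locked T sT) (.commit T sT) (.Inactive T)
  | abort {T sT : ℕ} :
      Step (.Locked T sT) (.abort T sT) (.Active (sT + 1))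

/-- Reachability by zero or more steps (labels existentially quantified). -/
inductive Reach : ObjState → ObjState → Prop where
  | refl (σ : ObjState) : Reach σ σ
  | tail {σ σ' σ'' : ObjState} (h : Reach σ σ') (ℓ : Label)
      (hs : Step σ' ℓ σ'') : Reach σ σ''

theorem Reach.invariant {P : ObjState → Prop}
    (hstep : ∀ {σ ℓ σ'}, Step σ ℓ σ' → P σ → P σ') {σ σ' : ObjState}
    (h : Reach σ σ') (hσ : P σ) : P σ' := by
  induction h with
  | refl => exact hσ
  | tail _ _ hs ih => exact hstep hs ih

/-- An inactive object carries no sequence number, so it satisfies the bound vacuously. -/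
def SeqAtLeast (s : ℕ) : ObjState → Prop
  | .Active s' => s ≤ s'
  | .Locked _ s' => s ≤ s'
  | .Inactive _ => True

theorem Step.seqAtLeast {s : ℕ} {σ σ' : ObjState} {ℓ : Label}
    (h : Step σ ℓ σ') (hσ : SeqAtLeast s σ) : SeqAtLeast s σ' := by
  cases h with
  | lock hge => exact le_trans hσ hge
  | commit => trivial
  | abort => exact Nat.le_succ_of_le hσ

theorem Reach.seqAtLeast_of_active {s : ℕ} {σ : ObjState} (h : Reach (.Active s) σ) :
    SeqAtLeast s σ :=
  h.invariant Step.seqAtLeast le_rfl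

theorem Step.le_of_lock {s T sT : ℕ} {σ : ObjState}
    (h : Step (.Active s) (.lock T sT) σ) : s ≤ sT := by
  cases h with
  | lock hge => exact hge

theorem Step.eq_active_succ_of_abort {T sT : ℕ} {σ σ' : ObjState}
    (h : Step σ (.abort T sT) σ') : σ' = .Active (sT + 1) := by
  cases h
  rfl

/-- **Sequence numbers never decrease along any execution**, and each abort
step strictly increases the object's sequence number. -/
theorem seq_monotone :
    (∀ (s : ℕ) (σ : ObjState), Reach (.Active s) σ →
      (∀ s' : ℕ, σ = .Active s' → s' ≥ s) ∧
      (∀ T' s' : ℕ, σ = .Locked T' s' → s' ≥ s)) ∧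
    (∀ (s T sT s' : ℕ),
      Step (.Active s) (.lock T sT) (.Locked T sT) →
      Step (.Locked T sT) (.abort T sT) (.Active s') →
      s' = sT + 1 ∧ sT + 1 > sT ∧ sT ≥ s) := by
  refine ⟨fun s σ h => ?_, fun s T sT s' hlock habort => ?_⟩
  · have hbound := h.seqAtLeast_of_active
    exact ⟨by rintro s' rfl; exact hbound, by rintro T' s' rfl; exact hbound⟩
  · exact ⟨ObjState.Active.inj habort.eq_active_succ_of_abort, Nat.lt_succ_self sT,
      hlock.le_of_lock⟩
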